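/- arXiv:1506.01129 — 3 statements merged into one kernel-verified Lean document; each statement's English description precedes it below -/
import Mathlib

section
/- Let X, Y be homogeneous multivector fields and f a differential form. Then L_{X∧Y} f = (−1)^{|Y|} i_Y L_X f + L_Y i_X f. -/
noncomputable section

/-- Lie derivative of forms along a degree-`k` multivector field whose interior product
is the operator `J`, via the graded Cartan homotopy formula `L = d ∘ J - (-1)^k (J ∘ d)`. -/
def lieDer {Ω : Type*} [AddCommGroup Ω] [Module ℝ Ω]
    (d J : Ω →ₗ[ℝ] Ω) (k : ℤ) : Ω →ₗ[ℝ] Ω :=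
  d ∘ₗ J - ((-1 : ℝ) ^ k) • (J ∘ₗ d)

/-- For homogeneous multivector fields `X, Y` of degrees `a, b` (with
wedge product `X ∧ Y` whose interior product composes as `i_{X∧Y} = i_Y ∘ i_X`) and
any differential form `f`: `L_{X∧Y} f = (-1)^{|Y|} i_Y (L_X f) + L_Y (i_X f)`. -/
theorem wedge_lie_derivative_identity
    {Ω : Type*} [AddCommGroup Ω] [Module ℝ Ω] {MV : ℤ → Type*}
    (d : Ω →ₗ[ℝ] Ω)
    (I : ∀ k, MV k → Ω →ₗ[ℝ] Ω)
    (W : ∀ a b, MV a → MV b → MV (a + b))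
    (hIW : ∀ (a b : ℤ) (X : MV a) (Y : MV b) (η : Ω),
      I (a + b) (W a b X Y) η = I b Y (I a X η))
    (a b : ℤ) (X : MV a) (Y : MV b) (f : Ω) :
    lieDer d (I (a + b) (W a b X Y)) (a + b) f
      = ((-1 : ℝ) ^ b) • I b Y (lieDer d (I a X) a f)
          + lieDer d (I b Y) b (I a X f) := by
  simp only [lieDer, LinearMap.sub_apply, LinearMap.smul_apply, LinearMap.comp_apply,
    hIW, map_sub, map_smul, smul_sub, smul_smul,
    zpow_add₀ (by norm_num : (-1 : ℝ) ≠ 0)]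
  ring_nf
  abel
end
end

section
/- For three forms f₁,f₂,f₃ with Hamiltonian multivector fields x₁,x₂,x₃ (i_{x_i}ω = df_i for a closed (n+1)-form ω), the shuffle-sum Jacobi expression Σ_{σ∈Sh(2,1)} sgn(σ) e(σ; sx₁,sx₂,sx₃) {{f_{σ(1)},f_{σ(2)}}, f_{σ(3)}} equals −Σ_{σ∈Sh(2,1)} sgn(σ) e(σ; sx₁,sx₂,sx₃) L_{[x_{σ(2)},x_{σ(1)}]} f_{σ(3)}; in particular it need not vanish for n ≥ 2. -/
noncomputable section

/-- The homotopy Poisson 2-bracket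
`{f, g} = - L_{x_f} g + (-1)^{(a-1)(b-1)} L_{x_g} f`, where `A`, `B` are the interior
products along Hamiltonian multivector fields of `f`, `g` of degrees `a`, `b`. -/
def pbr {Ω : Type*} [AddCommGroup Ω] [Module ℝ Ω]
    (d : Ω →ₗ[ℝ] Ω) (a b : ℤ) (A B : Ω →ₗ[ℝ] Ω) (f g : Ω) : Ω :=
  - lieDer d A a g + ((-1 : ℝ) ^ ((a - 1) * (b - 1))) • lieDer d B b f

private lemma lieDer_apply {Ω : Type*} [AddCommGroup Ω] [Module ℝ Ω]
    (d J : Ω →ₗ[ℝ] Ω) (k : ℤ) (η : Ω) :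
    lieDer d J k η = d (J η) - ((-1 : ℝ) ^ k) • J (d η) := by
  simp [lieDer]

private lemma sgn_eval (n : ℤ) : ((-1 : ℝ) ^ n) = if Even n then 1 else -1 := by
  rcases Int.even_or_odd n with h | h
  · simp [h, Even.neg_one_zpow h]
  · simp [Int.not_even_iff_odd.2 h, Odd.neg_one_zpow h]

set_option maxHeartbeats 4000000 in
/-- For forms `f₁, f₂, f₃` with Hamiltonian multivector fields
`x₁, x₂, x₃` (`i_{x_i} ω = d f_i`, `ω` closed), the `(2,1)`-shuffle Jacobi expression
`∑_{σ∈Sh(2,1)} sgn σ · e(σ; sx₁,sx₂,sx₃) {{f_{σ(1)},f_{σ(2)}}, f_{σ(3)}}`, written out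
over the three shuffles `(1,2|3), (1,3|2), (2,3|1)` with Koszul signs for the shifted
degrees `|sx_i| = k_i + 1` and with `2[x_j,x_i]` the Hamiltonian multivector field of
`{f_i,f_j}`, equals
`-∑_{σ∈Sh(2,1)} sgn σ · e(σ; sx₁,sx₂,sx₃) L_{[x_{σ(2)},x_{σ(1)}]} f_{σ(3)}`
(in particular it need not vanish for `n ≥ 2`). -/
theorem shuffle_jacobi_expression
    {Ω : Type*} [AddCommGroup Ω] [Module ℝ Ω] {MV : ℤ → Type*}
    [∀ k, AddCommGroup (MV k)] [∀ k, Module ℝ (MV k)]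
    (d : Ω →ₗ[ℝ] Ω) (hd2 : ∀ η : Ω, d (d η) = 0)
    (I : ∀ k, MV k →ₗ[ℝ] Ω →ₗ[ℝ] Ω)
    (SB : ∀ a b, MV a → MV b → MV (a + b - 1))
    (hSB : ∀ (a b : ℤ) (X : MV a) (Y : MV b) (η : Ω),
      I (a + b - 1) (SB a b X Y) η
        = ((-1 : ℝ) ^ ((a - 1) * b)) • lieDer d (I a X) a (I b Y η)
            - I b Y (lieDer d (I a X) a η))
    (ω : Ω) (hclosed : d ω = 0)
    (k₁ k₂ k₃ : ℤ) (f₁ f₂ f₃ : Ω)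
    (x₁ : MV k₁) (x₂ : MV k₂) (x₃ : MV k₃)
    (h₁ : I k₁ x₁ ω = d f₁) (h₂ : I k₂ x₂ ω = d f₂) (h₃ : I k₃ x₃ ω = d f₃) :
    pbr d (k₂ + k₁ - 1) k₃ (I (k₂ + k₁ - 1) ((2 : ℝ) • SB k₂ k₁ x₂ x₁)) (I k₃ x₃)
        (pbr d k₁ k₂ (I k₁ x₁) (I k₂ x₂) f₁ f₂) f₃
      - ((-1 : ℝ) ^ ((k₂ + 1) * (k₃ + 1))) •
          pbr d (k₃ + k₁ - 1) k₂ (I (k₃ + k₁ - 1) ((2 : ℝ) • SB k₃ k₁ x₃ x₁)) (I k₂ x₂)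
            (pbr d k₁ k₃ (I k₁ x₁) (I k₃ x₃) f₁ f₃) f₂
      + ((-1 : ℝ) ^ ((k₁ + 1) * (k₂ + 1) + (k₁ + 1) * (k₃ + 1))) •
          pbr d (k₃ + k₂ - 1) k₁ (I (k₃ + k₂ - 1) ((2 : ℝ) • SB k₃ k₂ x₃ x₂)) (I k₁ x₁)
            (pbr d k₂ k₃ (I k₂ x₂) (I k₃ x₃) f₂ f₃) f₁
    = - (lieDer d (I (k₂ + k₁ - 1) (SB k₂ k₁ x₂ x₁)) (k₂ + k₁ - 1) f₃
          - ((-1 : ℝ) ^ ((k₂ + 1) * (k₃ + 1))) •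
              lieDer d (I (k₃ + k₁ - 1) (SB k₃ k₁ x₃ x₁)) (k₃ + k₁ - 1) f₂
          + ((-1 : ℝ) ^ ((k₁ + 1) * (k₂ + 1) + (k₁ + 1) * (k₃ + 1))) •
              lieDer d (I (k₃ + k₂ - 1) (SB k₃ k₂ x₃ x₂)) (k₃ + k₂ - 1) f₁) := by
  obtain ⟨a, rfl | rfl⟩ := Int.even_or_odd' k₁ <;>
  obtain ⟨b, rfl | rfl⟩ := Int.even_or_odd' k₂ <;>
  obtain ⟨c, rfl | rfl⟩ := Int.even_or_odd' k₃ <;>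
  · simp only [pbr, lieDer_apply, hSB, map_smul, LinearMap.smul_apply, map_sub, map_add,
      map_neg, smul_sub, smul_add, smul_neg, smul_smul, h₁, h₂, h₃, hd2, hclosed, map_zero,
      smul_zero, sub_zero, zero_sub, neg_neg, neg_zero, add_zero, zero_add]
    simp only [sgn_eval, Int.even_mul, Int.even_sub, Int.even_add, parity_simps]
    norm_num
    module

end
end

section
/- On the 3-plectic manifold (ℝ⁶, ω) with ω = dx¹∧dx³∧dx⁵∧dx⁶ + dx²∧dx⁴∧dx⁵∧dx⁶, the 2-forms f₁ = (x₁²x₃ − x₄) dx⁵∧dx⁶ and f₂ = −(x₃ + x₂²x₄) dx⁵∧dx⁶ admit Hamiltonian vector fields x₁ = x₁²∂₁ − ∂₂ − 2x₁x₃∂₃ and x₂ = −∂₁ − x₂²∂₂ + 2x₂x₄∂₄ (i.e., i_{x_i}ω = df_i), and their Lie bracket is [x₂,x₁] = 2x₁∂₁ + 2x₂∂₂ − 2x₃∂₃ − 2x₄∂₄. -/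
noncomputable section

/-- A `k`-form on `ℝ⁶`, given pointwise as a function of `k` tangent vectors. -/
def Form (k : ℕ) : Type := (Fin 6 → ℝ) → (Fin k → (Fin 6 → ℝ)) → ℝ

/-- The constant-coefficient form `dx^{idx 0} ∧ ⋯ ∧ dx^{idx (k-1)}`, evaluated on `k`
tangent vectors as a determinant. -/
def dxW {k : ℕ} (idx : Fin k → Fin 6) (v : Fin k → (Fin 6 → ℝ)) : ℝ :=
  Matrix.det (Matrix.of fun a b : Fin k => v a (idx b))

/-- Exterior derivative of a `k`-form on `ℝ⁶`. -/
def extd {k : ℕ} (η : Form k) : Form (k + 1) := fun p v =>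
  ∑ i : Fin (k + 1),
    (-1 : ℝ) ^ (i : ℕ) * fderiv ℝ (fun q => η q (fun j => v (i.succAbove j))) p (v i)

/-- Interior product of a vector field with a `(k+1)`-form on `ℝ⁶`. -/
def intP {k : ℕ} (X : (Fin 6 → ℝ) → (Fin 6 → ℝ)) (η : Form (k + 1)) : Form k :=
  fun p v => η p (Fin.cons (X p) v)

/-- The Lie bracket of vector fields on `ℝ⁶`, in the convention
`[X,Y]^i = Y^j ∂_j X^i - X^j ∂_j Y^i` used in the source. -/
def lieBr (X Y : (Fin 6 → ℝ) → (Fin 6 → ℝ)) : (Fin 6 → ℝ) → (Fin 6 → ℝ) :=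
  fun p => fderiv ℝ X p (Y p) - fderiv ℝ Y p (X p)

/-- The 3-plectic form `ω = dx¹∧dx³∧dx⁵∧dx⁶ + dx²∧dx⁴∧dx⁵∧dx⁶` on `ℝ⁶` (0-indexed). -/
def omega6 : Form 4 := fun _ v => dxW ![0, 2, 4, 5] v + dxW ![1, 3, 4, 5] v

/-- `f₁ = (x₁² x₃ - x₄) dx⁵∧dx⁶`. -/
def form1 : Form 2 := fun p v => (p 0 ^ 2 * p 2 - p 3) * dxW ![4, 5] v

/-- `f₂ = -(x₃ + x₂² x₄) dx⁵∧dx⁶`. -/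
def form2 : Form 2 := fun p v => -(p 2 + p 1 ^ 2 * p 3) * dxW ![4, 5] v

/-- `x₁ = x₁² ∂₁ - ∂₂ - 2x₁x₃ ∂₃`. -/
def vf1 : (Fin 6 → ℝ) → (Fin 6 → ℝ) :=
  fun p => ![p 0 ^ 2, -1, -(2 * p 0 * p 2), 0, 0, 0]

/-- `x₂ = -∂₁ - x₂² ∂₂ + 2x₂x₄ ∂₄`. -/
def vf2 : (Fin 6 → ℝ) → (Fin 6 → ℝ) :=
  fun p => ![-1, -(p 1 ^ 2), 0, 2 * p 1 * p 3, 0, 0]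

/-! Both sides of `i_X ω = d f` are combinations of the 3-forms `dx^m ∧ dx⁵ ∧ dx⁶`: Laplace
expansion of the determinant along its first row computes `i_X (dx^I)`, and along its first
column it gives `d (g dx^I) = ∑ₘ ∂ₘ g dx^m ∧ dx^I`, so the identities reduce to comparing the
coefficients `Xᵐ` with the partial derivatives of `g`. The bracket is computed componentwise. -/

section Forms

variable {k : ℕ}

theorem dxW_cons_eq_sum (idx : Fin (k + 1) → Fin 6) (x : Fin 6 → ℝ) (v : Fin k → Fin 6 → ℝ) :
    dxW idx (Fin.cons x v) =
      ∑ j : Fin (k + 1), (-1) ^ (j : ℕ) * x (idx j) * dxW (idx ∘ j.succAbove) v := by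
  rw [dxW, Matrix.det_succ_row_zero]
  rfl

theorem dxW_vecCons_eq_sum (m : Fin 6) (idx : Fin k → Fin 6) (v : Fin (k + 1) → Fin 6 → ℝ) :
    dxW (Matrix.vecCons m idx) v =
      ∑ i : Fin (k + 1), (-1) ^ (i : ℕ) * v i m * dxW idx (fun j => v (i.succAbove j)) := by
  rw [dxW, Matrix.det_succ_column_zero]
  rfl

theorem extd_mul_dxW {g : (Fin 6 → ℝ) → ℝ} {p : Fin 6 → ℝ} (hg : DifferentiableAt ℝ g p)
    (idx : Fin k → Fin 6) (v : Fin (k + 1) → Fin 6 → ℝ) :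
    extd (fun q w => g q * dxW idx w) p v =
      ∑ m : Fin 6, fderiv ℝ g p (Pi.single m 1) * dxW (Matrix.vecCons m idx) v := by
  simp only [extd, fderiv_mul_const hg, smul_apply, smul_eq_mul, dxW_vecCons_eq_sum,
    Finset.mul_sum]
  rw [Finset.sum_comm]
  refine Finset.sum_congr rfl fun i _ => ?_
  conv_lhs => rw [pi_eq_sum_univ' (v i)]
  simp only [map_sum, map_smul, smul_eq_mul, Finset.mul_sum]
  refine Finset.sum_congr rfl fun m _ => ?_
  ring

end Forms

theorem intP_omega6 (X : (Fin 6 → ℝ) → Fin 6 → ℝ) (p : Fin 6 → ℝ) (v : Fin 3 → Fin 6 → ℝ)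
    (h4 : X p 4 = 0) (h5 : X p 5 = 0) :
    intP X omega6 p v = X p 0 * dxW ![2, 4, 5] v - X p 2 * dxW ![0, 4, 5] v
      + X p 1 * dxW ![3, 4, 5] v - X p 3 * dxW ![1, 4, 5] v := by
  have h025 : (![0, 2, 4, 5] ∘ Fin.succ : Fin 3 → Fin 6) = ![2, 4, 5] := by decide
  have h045 : (![0, 2, 4, 5] ∘ Fin.succAbove 1 : Fin 3 → Fin 6) = ![0, 4, 5] := by decide
  have h345 : (![1, 3, 4, 5] ∘ Fin.succ : Fin 3 → Fin 6) = ![3, 4, 5] := by decide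
  have h145 : (![1, 3, 4, 5] ∘ Fin.succAbove 1 : Fin 3 → Fin 6) = ![1, 4, 5] := by decide
  simp [intP, omega6, dxW_cons_eq_sum, Fin.sum_univ_four, h4, h5, h025, h045, h345, h145]
  ring

theorem fderiv_coord {ι : Type*} [Fintype ι] (i : ι) (p : ι → ℝ) :
    fderiv ℝ (fun q : ι → ℝ => q i) p = ContinuousLinearMap.proj i :=
  (hasFDerivAt_apply i p).fderiv

theorem intP_vf1_omega6 : intP (k := 3) vf1 omega6 = extd form1 := by
  funext p v
  unfold form1
  rw [intP_omega6 vf1 p v rfl rfl, extd_mul_dxW (by fun_prop)]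
  simp (disch := fun_prop) [Fin.sum_univ_six, fderiv_fun_sub, fderiv_fun_mul, fderiv_fun_pow,
    fderiv_coord, Pi.single_apply, vf1]
  ring

theorem intP_vf2_omega6 : intP (k := 3) vf2 omega6 = extd form2 := by
  funext p v
  unfold form2
  rw [intP_omega6 vf2 p v rfl rfl, extd_mul_dxW (by fun_prop)]
  simp (disch := fun_prop) [Fin.sum_univ_six, fderiv_fun_neg, fderiv_fun_add, fderiv_fun_mul,
    fderiv_fun_pow, fderiv_coord, Pi.single_apply, vf2]
  ring

theorem lieBr_apply {X Y : (Fin 6 → ℝ) → Fin 6 → ℝ} {p : Fin 6 → ℝ}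
    (hX : DifferentiableAt ℝ X p) (hY : DifferentiableAt ℝ Y p) (i : Fin 6) :
    lieBr X Y p i = fderiv ℝ (fun q => X q i) p (Y p) - fderiv ℝ (fun q => Y q i) p (X p) := by
  rw [lieBr, Pi.sub_apply, fderiv_apply hX, fderiv_apply hY]
  rfl

theorem differentiable_vf1 : Differentiable ℝ vf1 := by
  refine differentiable_pi.2 fun i => ?_
  fin_cases i <;> simp [vf1] <;> fun_prop

theorem differentiable_vf2 : Differentiable ℝ vf2 := by
  refine differentiable_pi.2 fun i => ?_
  fin_cases i <;> simp [vf2] <;> fun_prop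

theorem lieBr_vf2_vf1 :
    lieBr vf2 vf1 = fun p => ![2 * p 0, 2 * p 1, -(2 * p 2), -(2 * p 3), 0, 0] := by
  funext p i
  rw [lieBr_apply (differentiable_vf2 p) (differentiable_vf1 p)]
  fin_cases i <;>
    simp (disch := fun_prop) [vf1, vf2, fderiv_fun_neg, fderiv_fun_mul, fderiv_fun_pow,
      fderiv_coord] <;>
    ring

/-- On the 3-plectic manifold `(ℝ⁶, ω)` the 2-forms `f₁, f₂` admit the
Hamiltonian vector fields `x₁, x₂` (`i_{x_i} ω = d f_i`), and their Lie bracket is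
`[x₂,x₁] = 2x₁∂₁ + 2x₂∂₂ - 2x₃∂₃ - 2x₄∂₄`. -/
theorem r6_threeplectic_example :
    intP (k := 3) vf1 omega6 = extd form1 ∧
    intP (k := 3) vf2 omega6 = extd form2 ∧
    lieBr vf2 vf1 = fun p => ![2 * p 0, 2 * p 1, -(2 * p 2), -(2 * p 3), 0, 0] :=
  ⟨intP_vf1_omega6, intP_vf2_omega6, lieBr_vf2_vf1⟩

end
end
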